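/- arXiv:1708.04269 — 5 statements merged into one kernel-verified Lean document; each statement's English description precedes it below -/
import Mathlib

section
/- The series ∑_{n≥1} 1/(n² · binom(2n, n)) equals π²/18, i.e. ζ(2) = 3 · ∑_{n≥1} 1/(n² · binom(2n, n)). -/
/-!
The Beta integral gives
`1 / ((n + 1) ^ 2 * (2n + 2).choose (n + 1)) = ∫₀¹ tⁿ (1 - t)ⁿ⁺¹ / (n + 1) dt`, so the series
equals `∫₀¹ -log (1 - t (1 - t)) / t dt`. Since
`1 - t + t² = (1 - t)(1 - t⁶) / ((1 - t²)(1 - t³))` and `∫₀¹ -log (1 - tᵏ) / t dt = ζ(2) / k`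
(expand the logarithm and integrate termwise), the integral is
`ζ(2) (1 - 1/2 - 1/3 + 1/6) = ζ(2) / 3 = π² / 18`.
-/

open MeasureTheory Real Set
open scoped Nat

lemma setIntegral_Ioo_pow (m : ℕ) : ∫ t in Ioo (0 : ℝ) 1, t ^ m = 1 / (m + 1) := by
  rw [← integral_Ioc_eq_integral_Ioo, ← intervalIntegral.integral_of_le zero_le_one,
    integral_pow]
  simp

lemma setIntegral_Ioo_pow_mul_one_sub_pow (a b : ℕ) :
    ∫ t in Ioo (0 : ℝ) 1, t ^ a * (1 - t) ^ b = a ! * b ! / (a + b + 1)! := by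
  induction b generalizing a with
  | zero =>
    simp only [pow_zero, mul_one, setIntegral_Ioo_pow, Nat.factorial_zero, add_zero,
      Nat.factorial_succ, Nat.cast_mul]
    field_simp
    push_cast
    ring
  | succ b ih =>
    have hintegrable : ∀ c, IntegrableOn (fun t : ℝ => t ^ c * (1 - t) ^ b) (Ioo 0 1) := fun c =>
      (Continuous.integrableOn_Icc (by fun_prop)).mono_set Ioo_subset_Icc_self
    calc ∫ t in Ioo (0 : ℝ) 1, t ^ a * (1 - t) ^ (b + 1)
        = ∫ t in Ioo (0 : ℝ) 1, (t ^ a * (1 - t) ^ b - t ^ (a + 1) * (1 - t) ^ b) := by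
          congr 1 with t; ring
      _ = a ! * b ! / (a + b + 1)! - (a + 1)! * b ! / (a + 1 + b + 1)! := by
          rw [integral_sub (hintegrable a) (hintegrable (a + 1)), ih, ih]
      _ = a ! * (b + 1)! / (a + (b + 1) + 1)! := by
          rw [show a + 1 + b + 1 = a + b + 1 + 1 by ring,
            show a + (b + 1) + 1 = a + b + 1 + 1 by ring]
          simp only [Nat.factorial_succ, Nat.cast_mul]
          field_simp
          push_cast
          ring

lemma setIntegral_Ioo_pow_mul_one_sub_pow_succ_div (n : ℕ) :
    ∫ t in Ioo (0 : ℝ) 1, t ^ n * (1 - t) ^ (n + 1) / (n + 1) =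
      1 / ((n + 1) ^ 2 * (Nat.choose (2 * (n + 1)) (n + 1))) := by
  rw [integral_div, setIntegral_Ioo_pow_mul_one_sub_pow]
  have hchoose := Nat.choose_mul_factorial_mul_factorial (show n + 1 ≤ 2 * (n + 1) by omega)
  rw [show 2 * (n + 1) - (n + 1) = n + 1 by omega] at hchoose
  rw [show n + (n + 1) + 1 = 2 * (n + 1) by omega, ← hchoose]
  simp only [Nat.factorial_succ n, Nat.cast_mul]
  field_simp
  push_cast
  ring

lemma hasSum_integral_of_nonneg_of_hasSum {ι α : Type*} [Countable ι] [MeasurableSpace α]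
    {μ : Measure α} {f : ι → α → ℝ} {F : α → ℝ} (hf : ∀ n, Integrable (f n) μ)
    (hf₀ : ∀ n, ∀ᵐ a ∂μ, 0 ≤ f n a) (hsum : Summable fun n => ∫ a, f n a ∂μ)
    (hF : ∀ᵐ a ∂μ, HasSum (fun n => f n a) (F a)) :
    HasSum (fun n => ∫ a, f n a ∂μ) (∫ a, F a ∂μ) := by
  have hnorm : (fun n => ∫ a, ‖f n a‖ ∂μ) = fun n => ∫ a, f n a ∂μ := funext fun n =>
    integral_congr_ae <| (hf₀ n).mono fun a ha => Real.norm_of_nonneg ha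
  rw [← hnorm] at hsum
  rw [integral_congr_ae <| hF.mono fun a ha => ha.tsum_eq.symm]
  exact hasSum_integral_of_summable_integral_norm hf hsum

lemma hasSum_one_div_nat_add_one_sq : HasSum (fun n : ℕ => 1 / ((n : ℝ) + 1) ^ 2) (π ^ 2 / 6) := by
  simpa using (hasSum_nat_add_iff' 1).mpr hasSum_zeta_two

lemma hasSum_pow_div_log_one_sub_pow {k : ℕ} (hk : k ≠ 0) {t : ℝ} (ht : t ∈ Ioo 0 1) :
    HasSum (fun n : ℕ => t ^ (k * (n + 1) - 1) / (n + 1)) (-log (1 - t ^ k) / t) := by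
  have habs : |t ^ k| < 1 := by
    rw [abs_of_pos (pow_pos ht.1 k)]
    exact pow_lt_one₀ ht.1.le ht.2 hk
  have hterm : ∀ n : ℕ, t ^ (k * (n + 1) - 1) / (n + 1) = (t ^ k) ^ (n + 1) / (n + 1) / t :=
    fun n => by
      rw [← pow_mul, ← pow_sub_one_mul (mul_ne_zero hk n.succ_ne_zero)]
      field_simp [ht.1.ne']
  simpa only [hterm] using (hasSum_pow_div_log_of_abs_lt_one habs).div_const t

lemma setIntegral_Ioo_neg_log_one_sub_pow_div {k : ℕ} (hk : k ≠ 0) :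
    ∫ t in Ioo (0 : ℝ) 1, -log (1 - t ^ k) / t = π ^ 2 / 6 / k := by
  have hterm : ∀ n : ℕ, ∫ t in Ioo (0 : ℝ) 1, t ^ (k * (n + 1) - 1) / (n + 1) =
      1 / k * (1 / ((n : ℝ) + 1) ^ 2) := fun n => by
    rw [integral_div, setIntegral_Ioo_pow,
      Nat.cast_sub (Nat.one_le_iff_ne_zero.2 (mul_ne_zero hk n.succ_ne_zero))]
    push_cast
    field_simp
    ring
  have hsum : HasSum (fun n : ℕ => ∫ t in Ioo (0 : ℝ) 1, t ^ (k * (n + 1) - 1) / (n + 1))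
      (π ^ 2 / 6 / k) := by
    simp_rw [hterm, div_eq_inv_mul (π ^ 2 / 6), ← one_div]
    exact hasSum_one_div_nat_add_one_sq.mul_left _
  refine (hasSum_integral_of_nonneg_of_hasSum (fun n => ?_) (fun n => ?_) hsum.summable ?_).unique
    hsum
  · exact (Continuous.integrableOn_Icc (by fun_prop)).mono_set Ioo_subset_Icc_self
  · exact (ae_restrict_mem measurableSet_Ioo).mono fun t ht => by have := ht.1; positivity
  · exact (ae_restrict_mem measurableSet_Ioo).mono fun t ht =>
      hasSum_pow_div_log_one_sub_pow hk ht

lemma integrableOn_neg_log_one_sub_pow_div {k : ℕ} (hk : k ≠ 0) :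
    IntegrableOn (fun t : ℝ => -log (1 - t ^ k) / t) (Ioo 0 1) :=
  -- the Bochner integral of a non-integrable function is the junk value `0`
  Integrable.of_integral_ne_zero <| by
    rw [setIntegral_Ioo_neg_log_one_sub_pow_div hk]
    have : (0 : ℝ) < k := by exact_mod_cast Nat.pos_of_ne_zero hk
    positivity

lemma hasSum_pow_mul_one_sub_pow_div_log {t : ℝ} (ht : t ∈ Ioo 0 1) :
    HasSum (fun n : ℕ => t ^ n * (1 - t) ^ (n + 1) / (n + 1)) (-log (1 - t * (1 - t)) / t) := by
  have habs : |t * (1 - t)| < 1 := by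
    rw [abs_of_pos (mul_pos ht.1 (sub_pos.2 ht.2))]
    nlinarith [ht.1, ht.2]
  have hterm : ∀ n : ℕ,
      t ^ n * (1 - t) ^ (n + 1) / (n + 1) = (t * (1 - t)) ^ (n + 1) / (n + 1) / t := fun n => by
    rw [mul_pow, pow_succ t]
    field_simp [ht.1.ne']
  simpa only [hterm] using (hasSum_pow_div_log_of_abs_lt_one habs).div_const t

-- `1 - t + t ^ 2 = (1 + t ^ 3) / (1 + t)`
lemma log_one_sub_mul_one_sub {t : ℝ} (ht : t ∈ Ioo 0 1) :
    log (1 - t * (1 - t)) = log (1 - t) - log (1 - t ^ 2) - log (1 - t ^ 3) + log (1 - t ^ 6) := by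
  have hne : ∀ k : ℕ, k ≠ 0 → 1 - t ^ k ≠ 0 := fun k hk =>
    (sub_pos.2 (pow_lt_one₀ ht.1.le ht.2 hk)).ne'
  have h1 := hne 1 one_ne_zero
  have h2 := hne 2 two_ne_zero
  have h3 := hne 3 three_ne_zero
  have h6 := hne 6 (by norm_num)
  rw [pow_one] at h1
  rw [show 1 - t * (1 - t) = (1 - t) * (1 - t ^ 6) / ((1 - t ^ 2) * (1 - t ^ 3)) by
      field_simp; ring,
    log_div (mul_ne_zero h1 h6) (mul_ne_zero h2 h3), log_mul h1 h6, log_mul h2 h3]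
  ring

lemma summable_one_div_sq_mul_choose :
    Summable fun n : ℕ => (1 : ℝ) / ((n + 1) ^ 2 * (Nat.choose (2 * (n + 1)) (n + 1))) := by
  refine hasSum_one_div_nat_add_one_sq.summable.of_nonneg_of_le (fun n => by positivity)
    fun n => one_div_le_one_div_of_le (by positivity) (le_mul_of_one_le_right (by positivity) ?_)
  exact_mod_cast Nat.choose_pos (by omega)

lemma tsum_one_div_sq_mul_choose_eq_setIntegral :
    ∑' n : ℕ, (1 : ℝ) / ((n + 1) ^ 2 * (Nat.choose (2 * (n + 1)) (n + 1))) =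
      ∫ t in Ioo (0 : ℝ) 1, -log (1 - t * (1 - t)) / t := by
  have hsum := summable_one_div_sq_mul_choose
  simp_rw [← setIntegral_Ioo_pow_mul_one_sub_pow_succ_div] at hsum ⊢
  refine (hasSum_integral_of_nonneg_of_hasSum (fun n => ?_) (fun n => ?_) hsum ?_).tsum_eq
  · exact (Continuous.integrableOn_Icc (by fun_prop)).mono_set Ioo_subset_Icc_self
  · exact (ae_restrict_mem measurableSet_Ioo).mono fun t ht => by
      have := ht.1; have := sub_pos.2 ht.2; positivity
  · exact (ae_restrict_mem measurableSet_Ioo).mono fun t ht =>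
      hasSum_pow_mul_one_sub_pow_div_log ht

lemma setIntegral_Ioo_neg_log_one_sub_mul_one_sub_div :
    ∫ t in Ioo (0 : ℝ) 1, -log (1 - t * (1 - t)) / t = π ^ 2 / 18 := by
  have hlog : ∀ t ∈ Ioo (0 : ℝ) 1, -log (1 - t * (1 - t)) / t =
      -log (1 - t ^ 1) / t - -log (1 - t ^ 2) / t - -log (1 - t ^ 3) / t + -log (1 - t ^ 6) / t :=
    fun t ht => by rw [log_one_sub_mul_one_sub ht, pow_one]; ring
  have h1 := integrableOn_neg_log_one_sub_pow_div one_ne_zero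
  have h2 := integrableOn_neg_log_one_sub_pow_div two_ne_zero
  have h3 := integrableOn_neg_log_one_sub_pow_div three_ne_zero
  have h6 := integrableOn_neg_log_one_sub_pow_div (show 6 ≠ 0 by norm_num)
  rw [setIntegral_congr_fun measurableSet_Ioo hlog, integral_add ?_ h6,
    integral_sub ?_ h3, integral_sub h1 h2,
    setIntegral_Ioo_neg_log_one_sub_pow_div one_ne_zero,
    setIntegral_Ioo_neg_log_one_sub_pow_div two_ne_zero,
    setIntegral_Ioo_neg_log_one_sub_pow_div three_ne_zero,
    setIntegral_Ioo_neg_log_one_sub_pow_div (show 6 ≠ 0 by norm_num)]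
  · push_cast
    ring
  exacts [h1.sub h2, (h1.sub h2).sub h3]

theorem stmt_0 :
    ∑' n : ℕ, (1 : ℝ) / ((n + 1) ^ 2 * (Nat.choose (2 * (n + 1)) (n + 1))) =
      Real.pi ^ 2 / 18 := by
  rw [tsum_one_div_sq_mul_choose_eq_setIntegral, setIntegral_Ioo_neg_log_one_sub_mul_one_sub_div]
end

section
/- For all x with |x| ≤ 1, arcsin(x)² = (1/2) · ∑_{n≥0} 4^{n+1} · x^{2n+2} / ((2n+2)(2n+1) · binom(2n, n)). -/
/-!
Let `U x = ∑ cₙ x^(2n+1)` with `cₙ = 4ⁿ / ((2n+1) binom(2n, n))`. The recurrence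
`(2n+3) cₙ₊₁ = (2n+2) cₙ` says exactly that `(1 - x²) U' = x U + 1` on `(-1, 1)`, the
equation satisfied by `arcsin x / √(1 - x²)`; as both vanish at `0`, `√(1 - x²) U = arcsin`.
The series of the theorem is `G x = ∑ 4 cₙ x^(2n+2) / (2n+2)`, so `G' = 4 U = (2 arcsin²)'`,
which gives the identity on `(-1, 1)`. Since `cₙ² (n+1) ≤ 1`, the coefficients of `G` are
`O(n^(-3/2))`, so `G` is continuous on `[-1, 1]` and the identity extends to the endpoints.
-/

open Real Set

section EvenPowerSeries

variable {a : ℕ → ℝ} {C : ℝ}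

theorem abs_pow_two_mul_add_le {y r : ℝ} (hy : |y| ≤ r) (hr : r ≤ 1) (n k : ℕ) :
    |y ^ (2 * n + k)| ≤ (r ^ 2) ^ n := by
  have hy1 : |y| ≤ 1 := hy.trans hr
  calc |y ^ (2 * n + k)| = |y| ^ (2 * n + k) := abs_pow y _
    _ ≤ |y| ^ (2 * n) := pow_le_pow_of_le_one (abs_nonneg y) hy1 (by omega)
    _ ≤ r ^ (2 * n) := pow_le_pow_left₀ (abs_nonneg y) hy _
    _ = (r ^ 2) ^ n := pow_mul r 2 n

theorem summable_linear_mul_geometric {q : ℝ} (hq : |q| < 1) (b c : ℝ) :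
    Summable fun n : ℕ => (b * n + c) * q ^ n := by
  have hq' : ‖q‖ < 1 := hq
  refine ((summable_pow_mul_geometric_of_norm_lt_one 1 hq').mul_left b |>.add
    ((summable_geometric_of_norm_lt_one hq').mul_left c)).congr fun n => ?_
  ring

theorem summable_mul_pow_two_mul_add (ha : ∀ n, |a n| ≤ C * (n + 1)) (k : ℕ) {x : ℝ}
    (hx : |x| < 1) : Summable fun n => a n * x ^ (2 * n + k) := by
  have hx2 : |(|x| ^ 2)| < 1 := by
    rw [abs_of_nonneg (by positivity)]; nlinarith [abs_nonneg x]
  refine .of_norm_bounded (summable_linear_mul_geometric hx2 C C) fun n => ?_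
  rw [Real.norm_eq_abs, abs_mul]
  exact mul_le_mul (by linarith [ha n]) (abs_pow_two_mul_add_le le_rfl hx.le n k)
    (abs_nonneg _) (by linarith [abs_nonneg (a n), ha n])

theorem hasDerivAt_tsum_mul_pow_two_mul_add (ha : ∀ n, |a n| ≤ C) (k : ℕ) {x : ℝ}
    (hx : |x| < 1) :
    HasDerivAt (fun y => ∑' n, a n * y ^ (2 * n + (k + 1)))
      (∑' n, a n * ((2 * n + (k + 1) : ℕ) * x ^ (2 * n + k))) x := by
  obtain ⟨r, hxr, hr1⟩ := exists_between hx
  have hr0 : 0 < r := (abs_nonneg x).trans_lt hxr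
  have hr2 : |r ^ 2| < 1 := by
    rw [abs_of_nonneg (by positivity)]; nlinarith
  have hC : 0 ≤ C := (abs_nonneg _).trans (ha 0)
  refine hasDerivAt_tsum_of_isPreconnected
    (summable_linear_mul_geometric hr2 (2 * C) (C * (k + 1))) isOpen_Ioo isPreconnected_Ioo
    (t := Ioo (-r) r) (y₀ := 0)
    (fun n y _ => (hasDerivAt_pow _ y).const_mul (a n)) (fun n y hy => ?_)
    (by constructor <;> linarith) (by simp) (abs_lt.mp hxr)
  have hy : |y| ≤ r := (abs_lt.mpr hy).le
  rw [Real.norm_eq_abs, abs_mul, abs_mul, Nat.abs_cast, Nat.add_succ_sub_one]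
  calc |a n| * ((2 * n + (k + 1) : ℕ) * |y ^ (2 * n + k)|)
      ≤ C * ((2 * n + (k + 1) : ℕ) * (r ^ 2) ^ n) := by
        gcongr
        exacts [ha n, abs_pow_two_mul_add_le hy hr1.le n k]
    _ = (2 * C * n + C * (k + 1)) * (r ^ 2) ^ n := by push_cast; ring

end EvenPowerSeries

noncomputable def arcsinDivSqrtCoeff (n : ℕ) : ℝ := 4 ^ n / ((2 * n + 1) * n.centralBinom)

noncomputable def arcsinSqCoeff (n : ℕ) : ℝ :=
  4 ^ (n + 1) / ((2 * n + 2) * (2 * n + 1) * (Nat.choose (2 * n) n))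

namespace arcsinDivSqrtCoeff

theorem pos (n : ℕ) : 0 < arcsinDivSqrtCoeff n := by
  have := Nat.centralBinom_pos n
  unfold arcsinDivSqrtCoeff; positivity

@[simp] theorem zero : arcsinDivSqrtCoeff 0 = 1 := by simp [arcsinDivSqrtCoeff]

theorem succ (n : ℕ) :
    (2 * n + 3) * arcsinDivSqrtCoeff (n + 1) = (2 * n + 2) * arcsinDivSqrtCoeff n := by
  have h : ((n + 1 : ℕ) : ℝ) * (n + 1).centralBinom = 2 * (2 * n + 1) * n.centralBinom := by
    exact_mod_cast Nat.succ_mul_centralBinom_succ n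
  have h₀ : (n.centralBinom : ℝ) ≠ 0 := Nat.cast_ne_zero.mpr (Nat.centralBinom_ne_zero n)
  have h₁ : ((n + 1).centralBinom : ℝ) ≠ 0 := Nat.cast_ne_zero.mpr (Nat.centralBinom_ne_zero _)
  unfold arcsinDivSqrtCoeff
  field_simp
  push_cast at h ⊢
  linear_combination (-2 * (2 * n + 3) * 4 ^ n) * h

theorem sq_mul_le_one (n : ℕ) : arcsinDivSqrtCoeff n ^ 2 * (n + 1) ≤ 1 := by
  induction n with
  | zero => simp
  | succ n ih =>
    have key :
        ((2 * n + 3) * arcsinDivSqrtCoeff (n + 1)) ^ 2 * (n + 2) ≤ (2 * n + 3 : ℝ) ^ 2 := by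
      rw [succ n]
      calc ((2 * n + 2) * arcsinDivSqrtCoeff n) ^ 2 * (n + 2 : ℝ)
          = 4 * (n + 1 : ℝ) * (n + 2) * (arcsinDivSqrtCoeff n ^ 2 * (n + 1)) := by ring
        _ ≤ 4 * (n + 1 : ℝ) * (n + 2) * 1 := by gcongr
        _ ≤ (2 * n + 3 : ℝ) ^ 2 := by nlinarith
    push_cast
    refine le_of_mul_le_mul_left (a := (2 * n + 3 : ℝ) ^ 2) ?_ (by positivity)
    linear_combination key

theorem le_one (n : ℕ) : arcsinDivSqrtCoeff n ≤ 1 := by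
  have := sq_mul_le_one n
  nlinarith [pos n, (n.cast_nonneg : (0 : ℝ) ≤ n)]

end arcsinDivSqrtCoeff

theorem two_mul_add_two_mul_arcsinSqCoeff (n : ℕ) :
    (2 * n + 2) * arcsinSqCoeff n = 4 * arcsinDivSqrtCoeff n := by
  have := Nat.centralBinom_pos n
  rw [arcsinSqCoeff, arcsinDivSqrtCoeff, ← Nat.centralBinom_eq_two_mul_choose]
  field_simp
  ring

theorem arcsinSqCoeff_pos (n : ℕ) : 0 < arcsinSqCoeff n := by
  have := Nat.choose_pos (by omega : n ≤ 2 * n)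
  unfold arcsinSqCoeff; positivity

theorem summable_arcsinSqCoeff : Summable arcsinSqCoeff := by
  have hp : Summable fun n : ℕ => 2 * ((n + 1 : ℕ) ^ (3 / 2 : ℝ) : ℝ)⁻¹ :=
    ((summable_nat_add_iff 1).mpr (Real.summable_nat_rpow_inv.mpr (by norm_num))).mul_left 2
  refine hp.of_nonneg_of_le (fun n => (arcsinSqCoeff_pos n).le) fun n => ?_
  have hn : (0 : ℝ) < (n + 1 : ℕ) := by positivity
  have hsq : ((n + 1 : ℕ) ^ (3 / 2 : ℝ) : ℝ) ^ 2 = (n + 1 : ℕ) ^ 3 := by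
    rw [← Real.rpow_natCast, ← Real.rpow_mul hn.le]; norm_num
  rw [← div_eq_mul_inv, le_div_iff₀ (by positivity)]
  refine pow_le_pow_iff_left₀ (by have := arcsinSqCoeff_pos n; positivity) zero_le_two
    two_ne_zero |>.mp ?_
  have ha : arcsinSqCoeff n = 2 * arcsinDivSqrtCoeff n / (n + 1) := by
    rw [eq_div_iff (by positivity)]; linarith [two_mul_add_two_mul_arcsinSqCoeff n]
  rw [mul_pow, hsq, ha]
  push_cast
  field_simp
  nlinarith [arcsinDivSqrtCoeff.sq_mul_le_one n]

theorem IsOpen.eqOn_of_hasDerivAt {𝕜 G : Type*} [RCLike 𝕜] [NormedAddCommGroup G]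
    [NormedSpace 𝕜 G] {s : Set 𝕜} {f g f' : 𝕜 → G} {x : 𝕜} (hs : IsOpen s)
    (hs' : IsPreconnected s) (hf : ∀ y ∈ s, HasDerivAt f (f' y) y)
    (hg : ∀ y ∈ s, HasDerivAt g (f' y) y) (hx : x ∈ s) (hfgx : f x = g x) : s.EqOn f g :=
  hs.eqOn_of_deriv_eq hs' (fun y hy => (hf y hy).differentiableAt.differentiableWithinAt)
    (fun y hy => (hg y hy).differentiableAt.differentiableWithinAt)
    (fun y hy => by rw [(hf y hy).deriv, (hg y hy).deriv]) hx hfgx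

noncomputable def arcsinDivSqrtSeries (x : ℝ) : ℝ :=
  ∑' n, arcsinDivSqrtCoeff n * x ^ (2 * n + 1)

noncomputable def arcsinSqSeries (x : ℝ) : ℝ := ∑' n, arcsinSqCoeff n * x ^ (2 * n + 2)

section

variable {x : ℝ}

theorem one_sub_sq_mul_tsum_arcsinDivSqrtCoeff (hx : |x| < 1) :
    (1 - x ^ 2) * ∑' n, arcsinDivSqrtCoeff n * ((2 * n + 1 : ℕ) * x ^ (2 * n)) =
      x * arcsinDivSqrtSeries x + 1 := by
  have hs : ∀ b : ℝ, 0 ≤ b → b ≤ 2 → ∀ k,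
      Summable fun n : ℕ => (2 * n + b) * arcsinDivSqrtCoeff n * x ^ (2 * n + k) := by
    refine fun b hb0 hb2 k => summable_mul_pow_two_mul_add (C := 2) (fun n => ?_) k hx
    have := arcsinDivSqrtCoeff.pos n
    rw [abs_of_nonneg (by positivity)]
    nlinarith [arcsinDivSqrtCoeff.le_one n]
  have hS : ∑' n, arcsinDivSqrtCoeff n * ((2 * n + 1 : ℕ) * x ^ (2 * n)) =
      1 + ∑' n : ℕ, (2 * n + 2) * arcsinDivSqrtCoeff n * x ^ (2 * n + 2) := by
    have hS₀ : Summable fun n => arcsinDivSqrtCoeff n * ((2 * n + 1 : ℕ) * x ^ (2 * n)) :=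
      (hs 1 zero_le_one one_le_two 0).congr fun n => by push_cast; ring
    rw [hS₀.tsum_eq_zero_add]
    congr 1
    · simp
    · refine tsum_congr fun n => ?_
      push_cast
      linear_combination x ^ (2 * n + 2) * arcsinDivSqrtCoeff.succ n
  have hx2S : x ^ 2 * ∑' n, arcsinDivSqrtCoeff n * ((2 * n + 1 : ℕ) * x ^ (2 * n)) =
      ∑' n : ℕ, (2 * n + 1) * arcsinDivSqrtCoeff n * x ^ (2 * n + 2) := by
    rw [← tsum_mul_left]
    exact tsum_congr fun n => by push_cast; ring
  have hxU : x * arcsinDivSqrtSeries x = ∑' n, arcsinDivSqrtCoeff n * x ^ (2 * n + 2) := by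
    rw [arcsinDivSqrtSeries, ← tsum_mul_left]
    exact tsum_congr fun n => by ring
  rw [sub_mul, one_mul, hx2S, hS, hxU, add_sub_assoc, ← Summable.tsum_sub
    (hs 2 zero_le_two le_rfl 2) (hs 1 zero_le_one one_le_two 2), add_comm]
  exact congrArg (· + 1) (tsum_congr fun n => by ring)

theorem hasDerivAt_arcsinDivSqrtSeries (hx : |x| < 1) :
    HasDerivAt arcsinDivSqrtSeries ((x * arcsinDivSqrtSeries x + 1) / (1 - x ^ 2)) x := by
  have habs n : |arcsinDivSqrtCoeff n| ≤ 1 :=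
    (abs_of_pos (arcsinDivSqrtCoeff.pos n)).trans_le (arcsinDivSqrtCoeff.le_one n)
  have h := hasDerivAt_tsum_mul_pow_two_mul_add habs 0 hx
  simp only [add_zero, zero_add] at h
  have h1 : 0 < 1 - x ^ 2 := by nlinarith [sq_abs x, abs_nonneg x]
  rw [← one_sub_sq_mul_tsum_arcsinDivSqrtCoeff hx, mul_div_cancel_left₀ _ h1.ne']
  exact h

theorem hasDerivAt_arcsinSqSeries (hx : |x| < 1) :
    HasDerivAt arcsinSqSeries (4 * arcsinDivSqrtSeries x) x := by
  have habs : ∀ n, |arcsinSqCoeff n| ≤ 2 := fun n => by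
    rw [abs_of_pos (arcsinSqCoeff_pos n)]
    nlinarith [two_mul_add_two_mul_arcsinSqCoeff n, arcsinDivSqrtCoeff.le_one n,
      arcsinSqCoeff_pos n, n.cast_nonneg (α := ℝ)]
  have h := hasDerivAt_tsum_mul_pow_two_mul_add habs 1 hx
  simp only [Nat.reduceAdd] at h
  refine h.congr_deriv ?_
  rw [arcsinDivSqrtSeries, ← tsum_mul_left]
  refine tsum_congr fun n => ?_
  push_cast
  linear_combination x ^ (2 * n + 1) * two_mul_add_two_mul_arcsinSqCoeff n

theorem sqrt_one_sub_sq_mul_arcsinDivSqrtSeries (hx : x ∈ Ioo (-1) 1) :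
    √(1 - x ^ 2) * arcsinDivSqrtSeries x = arcsin x := by
  refine isOpen_Ioo.eqOn_of_hasDerivAt isPreconnected_Ioo
    (f := fun y => √(1 - y ^ 2) * arcsinDivSqrtSeries y) (f' := fun y => 1 / √(1 - y ^ 2))
    (fun y hy => ?_) (fun y hy => hasDerivAt_arcsin hy.1.ne' hy.2.ne)
    (by norm_num : (0 : ℝ) ∈ Ioo (-1) 1) (by simp [arcsinDivSqrtSeries]) hx
  have hy1 : 0 < 1 - y ^ 2 := by nlinarith [hy.1, hy.2]
  have hsq : HasDerivAt (fun z => √(1 - z ^ 2)) (-(2 * y) / (2 * √(1 - y ^ 2))) y := by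
    refine HasDerivAt.sqrt ?_ hy1.ne'
    simpa using (hasDerivAt_pow 2 y).const_sub 1
  refine (hsq.mul (hasDerivAt_arcsinDivSqrtSeries (abs_lt.mpr hy))).congr_deriv ?_
  have hs : 0 < √(1 - y ^ 2) := Real.sqrt_pos.mpr hy1
  field_simp
  rw [Real.sq_sqrt hy1.le]
  ring

theorem arcsin_sq_eq_of_mem_Ioo (hx : x ∈ Ioo (-1) 1) :
    arcsin x ^ 2 = arcsinSqSeries x / 2 := by
  refine isOpen_Ioo.eqOn_of_hasDerivAt isPreconnected_Ioo (f := fun y => arcsin y ^ 2)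
    (f' := fun y => 2 * arcsinDivSqrtSeries y) (fun y hy => ?_)
    (fun y hy => ((hasDerivAt_arcsinSqSeries (abs_lt.mpr hy)).div_const 2).congr_deriv (by ring))
    (by norm_num : (0 : ℝ) ∈ Ioo (-1) 1) (by simp [arcsinSqSeries]) hx
  refine ((hasDerivAt_arcsin hy.1.ne' hy.2.ne).pow 2).congr_deriv ?_
  have hs : 0 < √(1 - y ^ 2) := Real.sqrt_pos.mpr (by nlinarith [hy.1, hy.2])
  rw [← sqrt_one_sub_sq_mul_arcsinDivSqrtSeries hy]
  field_simp
  ring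

theorem continuousOn_arcsinSqSeries : ContinuousOn arcsinSqSeries (Icc (-1) 1) := by
  refine continuousOn_tsum (fun n => by fun_prop) summable_arcsinSqCoeff fun n y hy => ?_
  rw [Real.norm_eq_abs, abs_mul, abs_of_pos (arcsinSqCoeff_pos n)]
  have := abs_pow_two_mul_add_le (abs_le.mpr hy) le_rfl n 2
  rw [one_pow, one_pow] at this
  nlinarith [arcsinSqCoeff_pos n]

theorem arcsin_sq_eq_of_mem_Icc (hx : x ∈ Icc (-1) 1) :
    arcsin x ^ 2 = arcsinSqSeries x / 2 :=
  Set.EqOn.of_subset_closure (fun _ hy => arcsin_sq_eq_of_mem_Ioo hy)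
    (continuous_arcsin.pow 2).continuousOn (continuousOn_arcsinSqSeries.div_const 2)
    Ioo_subset_Icc_self (by rw [closure_Ioo (by norm_num)]) hx

end

theorem stmt_1 (x : ℝ) (hx : |x| ≤ 1) :
    Real.arcsin x ^ 2 =
      (1 / 2) * ∑' n : ℕ,
        (4 : ℝ) ^ (n + 1) * x ^ (2 * n + 2) /
          ((2 * n + 2) * (2 * n + 1) * (Nat.choose (2 * n) n)) := by
  rw [arcsin_sq_eq_of_mem_Icc (abs_le.mp hx), arcsinSqSeries, one_div_mul_eq_div]
  simp only [arcsinSqCoeff, div_mul_eq_mul_div, mul_right_comm]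
end

section
/- ∑_{n≥1} 16^n / (n² (2n+1)² binom(2n,n)²) = 4(π − 3). -/
/-!
Writing `W n` for the `n`-th partial Wallis product, `16 ^ n / binom(2n, n) ^ 2 = (2n + 1) W n`,
so the `n`-th term is `W n / (n ^ 2 (2n + 1))`. Because `W (n + 1) / W n` is rational in `n`,
Gosper's algorithm applies and the term telescopes: it is the forward difference of
`(4n - 1)(2n + 1) / n ^ 2 * W n` (below `antidiff (n - 1)`), which is `12` at `n = 1` and tends to
`8 · π / 2 = 4π` by Wallis' formula.
-/

open Filter Topology Finset

theorem hasSum_sub_succ_of_monotone {g : ℕ → ℝ} {L : ℝ} (hmono : Monotone g)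
    (hg : Tendsto g atTop (𝓝 L)) : HasSum (fun n ↦ g (n + 1) - g n) (L - g 0) := by
  refine (hasSum_iff_tendsto_nat_of_nonneg (fun n ↦ sub_nonneg.2 (hmono n.le_succ)) _).2 ?_
  simp_rw [sum_range_sub]
  exact hg.sub_const _

namespace Real.Wallis

theorem W_mul_centralBinom_sq (n : ℕ) :
    W n * (n.centralBinom : ℝ) ^ 2 * (2 * n + 1) = 16 ^ n := by
  induction n with
  | zero => simp [W]
  | succ n ih =>
    have hrec : ((n + 1 : ℕ) : ℝ) * (n + 1).centralBinom = 2 * (2 * n + 1) * n.centralBinom := by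
      exact_mod_cast Nat.succ_mul_centralBinom_succ n
    rw [W_succ, pow_succ (16 : ℝ) n, ← ih]
    push_cast at hrec ⊢
    have h1 : (2 * n + 1 : ℝ) ≠ 0 := by positivity
    have h3 : (2 * n + 3 : ℝ) ≠ 0 := by positivity
    field_simp
    linear_combination 4 * W n * (2 * n + 3) *
      ((n + 1) * (n + 1).centralBinom + 2 * (2 * n + 1) * n.centralBinom) * hrec

theorem sixteen_pow_div_centralBinom_sq (n : ℕ) :
    (16 : ℝ) ^ n / (n ^ 2 * (2 * n + 1) ^ 2 * (n.centralBinom : ℝ) ^ 2) =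
      W n / ((2 * n + 1) * n ^ 2) := by
  have hC : (n.centralBinom : ℝ) ≠ 0 := by exact_mod_cast n.centralBinom_ne_zero
  have hodd : (2 * n + 1 : ℝ) ≠ 0 := by positivity
  rw [← W_mul_centralBinom_sq]
  field_simp

noncomputable def antidiff (k : ℕ) : ℝ :=
  (4 * k + 3) * (2 * k + 3) / (k + 1) ^ 2 * W (k + 1)

theorem antidiff_succ_sub (k : ℕ) :
    antidiff (k + 1) - antidiff k = W (k + 1) / ((2 * (k + 1) + 1) * (k + 1) ^ 2) := by
  rw [antidiff, antidiff, W_succ (k + 1)]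
  have h1 : (2 * k + 3 : ℝ) ≠ 0 := by positivity
  have h2 : (2 * k + 5 : ℝ) ≠ 0 := by positivity
  push_cast
  field_simp
  ring

theorem antidiff_zero : antidiff 0 = 12 := by
  norm_num [antidiff, W]

theorem monotone_antidiff : Monotone antidiff :=
  monotone_nat_of_le_succ fun k ↦ sub_nonneg.1 <| by
    rw [antidiff_succ_sub]
    exact div_nonneg (W_pos _).le (by positivity)

theorem tendsto_antidiff : Tendsto antidiff atTop (𝓝 (4 * π)) := by
  have hinv := tendsto_one_div_add_atTop_nhds_zero_nat (𝕜 := ℝ)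
  have hrat : Tendsto (fun k : ℕ ↦ (4 - 1 / ((k : ℝ) + 1)) * (2 + 1 / ((k : ℝ) + 1)))
      atTop (𝓝 8) := by
    convert (tendsto_const_nhds.sub hinv).mul (tendsto_const_nhds.add hinv) using 2
    norm_num
  have hW : Tendsto (fun k ↦ W (k + 1)) atTop (𝓝 (π / 2)) :=
    tendsto_W_nhds_pi_div_two.comp (tendsto_add_atTop_nat 1)
  convert hrat.mul hW using 1
  · ext k
    have hk : (k + 1 : ℝ) ≠ 0 := by positivity
    rw [antidiff]
    field_simp
    ring
  · congr 1; ring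

end Real.Wallis

open Real.Wallis

theorem stmt_5 :
    ∑' n : ℕ,
        (16 : ℝ) ^ (n + 1) /
          ((n + 1) ^ 2 * (2 * (n + 1) + 1) ^ 2 *
            (Nat.choose (2 * (n + 1)) (n + 1)) ^ 2) =
      4 * (Real.pi - 3) := by
  have hterm : ∀ n : ℕ, (16 : ℝ) ^ (n + 1) /
      ((n + 1) ^ 2 * (2 * (n + 1) + 1) ^ 2 * (Nat.choose (2 * (n + 1)) (n + 1)) ^ 2) =
        antidiff (n + 1) - antidiff n := fun n ↦ by
    have h := sixteen_pow_div_centralBinom_sq (n + 1)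
    rw [Nat.centralBinom_eq_two_mul_choose] at h
    push_cast at h
    rw [h, antidiff_succ_sub]
  simp_rw [hterm]
  rw [(hasSum_sub_succ_of_monotone monotone_antidiff tendsto_antidiff).tsum_eq, antidiff_zero]
  ring
end

section
/- ∑_{n≥1} 2^n / ((n+1) · n² · binom(2n, n)) = π/2 − 1. -/
/-!
Integrating `x (1 - x²)^(m+1)` by parts gives Wallis' recursion, whence
`∫₀¹ (1 - x²)^m dx = 4^m / ((2m + 1) binom(2m, m))`. Summing the geometric series in
`(1 - x²)/2` under the integral then yields
`∑_{m ≥ 0} 2^m / ((2m + 1) binom(2m, m)) = ∫₀¹ 2 / (1 + x²) dx = π/2`.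
The summand of the theorem differs from `2^m / ((2m + 1) binom(2m, m))` by `c m - c (m + 1)` with
`c m = (1 - m) 2^m / (m² binom(2m, m))`; since `c 1 = 0` and `c m → 0`, dropping the `m = 0` term
leaves `π/2 - 1`.
-/

open Real Filter Topology intervalIntegral
open scoped Interval

theorem HasSum.sub_succ {G : Type*} [AddCommGroup G] [TopologicalSpace G]
    [IsTopologicalAddGroup G] {f : ℕ → G} {s : G} (hf : HasSum f s) :
    HasSum (fun n ↦ f n - f (n + 1)) (f 0) := by
  have hshift : HasSum (fun n ↦ f (n + 1)) (s - f 0) := by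
    simpa using (hasSum_nat_add_iff' 1).2 hf
  simpa using hf.sub hshift

lemma integral_one_sub_sq_pow_succ (m : ℕ) :
    (2 * m + 3 : ℝ) * ∫ x in (0 : ℝ)..1, (1 - x ^ 2) ^ (m + 1) =
      2 * (m + 1) * ∫ x in (0 : ℝ)..1, (1 - x ^ 2) ^ m := by
  have hderiv (x : ℝ) : HasDerivAt (fun x ↦ x * (1 - x ^ 2) ^ (m + 1))
      ((2 * m + 3) * (1 - x ^ 2) ^ (m + 1) - 2 * (m + 1) * (1 - x ^ 2) ^ m) x := by
    have := (hasDerivAt_id' x).fun_mul (((hasDerivAt_pow 2 x).const_sub 1).fun_pow (m + 1))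
    refine this.congr_deriv ?_
    rw [Nat.add_sub_cancel]
    push_cast
    ring
  have hFTC := integral_eq_sub_of_hasDerivAt (a := 0) (b := 1) (fun x _ ↦ hderiv x)
    (by apply Continuous.intervalIntegrable; fun_prop)
  rw [integral_sub (by apply Continuous.intervalIntegrable; fun_prop)
    (by apply Continuous.intervalIntegrable; fun_prop), integral_const_mul,
    integral_const_mul] at hFTC
  norm_num at hFTC
  linarith

lemma integral_one_sub_sq_pow (m : ℕ) :
    ∫ x in (0 : ℝ)..1, (1 - x ^ 2) ^ m = (4 : ℝ) ^ m / ((2 * m + 1) * m.centralBinom) := by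
  induction m with
  | zero => simp
  | succ m ih =>
    have hrec := integral_one_sub_sq_pow_succ m
    have hbinom : ((m : ℝ) + 1) * (m + 1).centralBinom = 2 * (2 * m + 1) * m.centralBinom := by
      exact_mod_cast Nat.succ_mul_centralBinom_succ m
    have hpos : (0 : ℝ) < m.centralBinom := by exact_mod_cast m.centralBinom_pos
    have hpos' : (0 : ℝ) < (m + 1).centralBinom := by exact_mod_cast (m + 1).centralBinom_pos
    rw [ih] at hrec
    field_simp at hrec
    push_cast
    rw [eq_div_iff (by positivity)]
    apply mul_left_cancel₀ (by positivity : (m : ℝ) + 1 ≠ 0)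
    linear_combination
      ((2 * m + 3) * ∫ x in (0 : ℝ)..1, (1 - x ^ 2) ^ (m + 1)) * hbinom + 2 * hrec

lemma hasSum_one_sub_sq_div_two_pow {x : ℝ} (hx : x ^ 2 < 3) :
    HasSum (fun m : ℕ ↦ ((1 - x ^ 2) / 2) ^ m) (2 / (1 + x ^ 2)) := by
  have hr : |(1 - x ^ 2) / 2| < 1 := abs_lt.2 ⟨by nlinarith, by nlinarith⟩
  convert hasSum_geometric_of_abs_lt_one hr using 1
  rw [show (1 : ℝ) - (1 - x ^ 2) / 2 = (1 + x ^ 2) / 2 by ring, inv_div]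

lemma hasSum_two_pow_div_centralBinom :
    HasSum (fun m : ℕ ↦ (2 : ℝ) ^ m / ((2 * m + 1) * m.centralBinom)) (π / 2) := by
  have hterm (m : ℕ) : (2 : ℝ) ^ m / ((2 * m + 1) * m.centralBinom) =
      ∫ x in (0 : ℝ)..1, ((1 - x ^ 2) / 2) ^ m := by
    have hpos : (0 : ℝ) < m.centralBinom := by exact_mod_cast m.centralBinom_pos
    simp_rw [div_pow, intervalIntegral.integral_div, integral_one_sub_sq_pow,
      show (4 : ℝ) = 2 * 2 by norm_num, mul_pow]
    field_simp
  have hsq_le {x : ℝ} (hx : x ∈ Ι (0 : ℝ) 1) : x ^ 2 ≤ 1 := by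
    rw [Set.uIoc_of_le zero_le_one] at hx
    exact pow_le_one₀ hx.1.le hx.2
  have hbound {x : ℝ} (hx : x ^ 2 ≤ 1) (m : ℕ) :
      ‖((1 - x ^ 2) / 2) ^ m‖ ≤ (1 / 2) ^ m := by
    rw [norm_pow, Real.norm_eq_abs]
    exact pow_le_pow_left₀ (abs_nonneg _) (abs_le.2 ⟨by nlinarith, by nlinarith⟩) m
  have hpi : ∫ x in (0 : ℝ)..1, 2 / (1 + x ^ 2) = π / 2 := by
    simp only [div_eq_mul_inv (2 : ℝ)]
    rw [integral_const_mul, integral_inv_one_add_sq, arctan_one, arctan_zero]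
    ring
  simp_rw [hterm, ← hpi]
  exact hasSum_integral_of_dominated_convergence (fun m _ ↦ (1 / 2 : ℝ) ^ m)
    (fun m ↦ by fun_prop) (fun m ↦ .of_forall fun x hx ↦ hbound (hsq_le hx) m)
    (.of_forall fun _ _ ↦ summable_geometric_two) intervalIntegrable_const
    (.of_forall fun x hx ↦ hasSum_one_sub_sq_div_two_pow (by linarith [hsq_le hx]))

noncomputable def telescopingTerm (m : ℕ) : ℝ := (1 - m) * 2 ^ m / (m ^ 2 * m.centralBinom)

lemma abs_telescopingTerm_le (m : ℕ) : |telescopingTerm m| ≤ 2 * (1 / 2) ^ m := by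
  rcases m.eq_zero_or_pos with rfl | hm
  · simp [telescopingTerm]
  have hm' : (1 : ℝ) ≤ m := by exact_mod_cast hm
  have hpos : (0 : ℝ) < m.centralBinom := by exact_mod_cast m.centralBinom_pos
  have hcentral : (4 : ℝ) ^ m ≤ 2 * m * m.centralBinom := by
    exact_mod_cast Nat.four_pow_le_two_mul_self_mul_centralBinom m hm
  have hhalf : (1 / 2 : ℝ) ^ m * 4 ^ m = 2 ^ m := by
    rw [← mul_pow]; norm_num
  rw [telescopingTerm, abs_div, abs_mul, abs_of_nonpos (by linarith),
    abs_of_pos (by positivity), abs_of_pos (by positivity), div_le_iff₀ (by positivity)]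
  calc -(1 - m) * (2 : ℝ) ^ m ≤ m * ((1 / 2) ^ m * 4 ^ m) := by rw [hhalf]; gcongr; linarith
    _ ≤ m * ((1 / 2) ^ m * (2 * m * m.centralBinom)) := by gcongr
    _ = 2 * (1 / 2) ^ m * (m ^ 2 * m.centralBinom) := by ring

lemma summable_telescopingTerm : Summable telescopingTerm :=
  .of_norm_bounded (summable_geometric_two.mul_left 2) abs_telescopingTerm_le

lemma two_pow_div_eq_add_telescopingTerm_sub {m : ℕ} (hm : m ≠ 0) :
    (2 : ℝ) ^ m / ((m + 1) * m ^ 2 * m.centralBinom) =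
      2 ^ m / ((2 * m + 1) * m.centralBinom) + (telescopingTerm m - telescopingTerm (m + 1)) := by
  have hpos : (0 : ℝ) < m.centralBinom := by exact_mod_cast m.centralBinom_pos
  have hbinom : ((m + 1).centralBinom : ℝ) = 2 * (2 * m + 1) * m.centralBinom / (m + 1) := by
    rw [eq_div_iff (by positivity), mul_comm]
    exact_mod_cast Nat.succ_mul_centralBinom_succ m
  rw [telescopingTerm, telescopingTerm, hbinom]
  push_cast
  field_simp
  ring

theorem stmt_9 :
    ∑' n : ℕ,
        (2 : ℝ) ^ (n + 1) /
          ((n + 2) * (n + 1) ^ 2 * (Nat.choose (2 * (n + 1)) (n + 1))) =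
      Real.pi / 2 - 1 := by
  have hmain := (hasSum_nat_add_iff' 1).2 hasSum_two_pow_div_centralBinom
  have htele := ((summable_nat_add_iff 1).2 summable_telescopingTerm).hasSum.sub_succ
  have hsum := hmain.add htele
  simp only [← two_pow_div_eq_add_telescopingTerm_sub (Nat.succ_ne_zero _),
    Nat.succ_eq_add_one] at hsum
  convert hsum.tsum_eq using 1
  · congr with n
    rw [← Nat.centralBinom_eq_two_mul_choose]
    push_cast
    ring
  · simp [telescopingTerm]
end

section
/- For every real m > 1/2, ∑_{n≥1} 1 / (n² (m² + m³)^n binom(3n, n)) = (2/3)·arctan(√((3m−1)/((m+1)(2m−1)²)))² − (1/2)·log(1 + 1/m)². -/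
/-!
Write `p = m ^ 2 + m ^ 3` and `S_k(p) = ∑_{n ≥ 1} 1 / (n ^ k p ^ n C(3n, n))`.
Differentiating termwise, `S_2' = -S_1 / p`. The Beta integral
`∫₀¹ t ^ (n - 1) (1 - t) ^ (2n) dt = 1 / (n C(3n, n))` turns `S_1(p)` into the integral of a
geometric series, `∫₀¹ (1 - t) ^ 2 / (p - t (1 - t) ^ 2) dt`. For `p = m ^ 2 + m ^ 3` the
denominator factors as `(1 + m - t) (t ^ 2 + (m - 1) t + m ^ 2)`, and partial fractions evaluate
the integral by a logarithm and an arctangent. Hence both sides of the identity have the same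
derivative in `m` on `(1/2, ∞)`; both tend to `0` as `m → ∞`, so they agree.
-/

open Real Filter Topology Set intervalIntegral
open scoped Nat

lemma four_pow_le_two_mul_mul_choose_three_mul {n : ℕ} (hn : 0 < n) :
    4 ^ n ≤ 2 * n * (3 * n).choose n := by
  calc 4 ^ n ≤ 2 * n * n.centralBinom := Nat.four_pow_le_two_mul_self_mul_centralBinom n hn
    _ ≤ 2 * n * (3 * n).choose n := by
      rw [Nat.centralBinom_eq_two_mul_choose]
      gcongr
      omega

lemma integral_pow_mul_one_sub_pow (a b : ℕ) :
    ∫ t in (0 : ℝ)..1, t ^ a * (1 - t) ^ b = a ! * b ! / (a + b + 1)! := by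
  induction b generalizing a with
  | zero =>
    simp [Nat.factorial_succ]
    field_simp
  | succ b ih =>
    have hderiv : ∀ t : ℝ, HasDerivAt (fun t : ℝ => t ^ (a + 1) * (1 - t) ^ (b + 1))
        ((a + 1) * (t ^ a * (1 - t) ^ (b + 1)) - (b + 1) * (t ^ (a + 1) * (1 - t) ^ b)) t := by
      intro t
      have h := (hasDerivAt_pow (a + 1) t).fun_mul
        (((hasDerivAt_id' t).const_sub 1).fun_pow (b + 1))
      refine h.congr_deriv ?_
      simp only [Nat.add_sub_cancel]
      push_cast
      ring
    have hrec := integral_eq_sub_of_hasDerivAt (fun t _ => hderiv t)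
      (Continuous.intervalIntegrable (by fun_prop) 0 1)
    rw [integral_sub ((Continuous.intervalIntegrable (by fun_prop) _ _).const_mul _)
      ((Continuous.intervalIntegrable (by fun_prop) _ _).const_mul _),
      integral_const_mul, integral_const_mul, ih (a + 1)] at hrec
    have hsum : a + 1 + b + 1 = a + (b + 1) + 1 := by omega
    rw [hsum, Nat.factorial_succ a] at hrec
    rw [Nat.factorial_succ b]
    push_cast at hrec ⊢
    simp only [one_pow, sub_self, zero_pow (Nat.succ_ne_zero _), zero_mul, sub_zero] at hrec
    have ha : (a : ℝ) + 1 ≠ 0 := by positivity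
    rw [eq_div_iff (by positivity)]
    field_simp at hrec
    apply mul_left_cancel₀ ha
    linear_combination hrec

lemma integral_pow_mul_one_sub_pow_two_mul_add_two (n : ℕ) :
    ∫ t in (0 : ℝ)..1, t ^ n * (1 - t) ^ (2 * n + 2) =
      1 / ((n + 1) * (Nat.choose (3 * (n + 1)) (n + 1))) := by
  have hchoose := Nat.choose_mul_factorial_mul_factorial (show n + 1 ≤ 3 * (n + 1) by omega)
  rw [show 3 * (n + 1) - (n + 1) = 2 * n + 2 by omega] at hchoose
  rw [integral_pow_mul_one_sub_pow, show n + (2 * n + 2) + 1 = 3 * (n + 1) by omega,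
    ← hchoose, Nat.factorial_succ n]
  push_cast
  field_simp

noncomputable def binomTerm (k : ℕ) (p : ℝ) (n : ℕ) : ℝ :=
  1 / ((n + 1) ^ k * p ^ (n + 1) * (Nat.choose (3 * (n + 1)) (n + 1)))

/-- `binomSeries k p = ∑_{n ≥ 1} 1 / (n ^ k p ^ n C(3n, n))`; `binomTerm k p n` is the term of
index `n + 1`. -/
noncomputable def binomSeries (k : ℕ) (p : ℝ) : ℝ := ∑' n : ℕ, binomTerm k p n

lemma binomTerm_nonneg (k : ℕ) {p : ℝ} (hp : 0 ≤ p) (n : ℕ) : 0 ≤ binomTerm k p n := by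
  unfold binomTerm
  positivity

lemma binomTerm_anti (k : ℕ) {p q : ℝ} (hp : 0 < p) (hpq : p ≤ q) (n : ℕ) :
    binomTerm k q n ≤ binomTerm k p n := by
  unfold binomTerm
  have : (0 : ℝ) < Nat.choose (3 * (n + 1)) (n + 1) := by
    exact_mod_cast Nat.choose_pos (by omega)
  gcongr

lemma binomTerm_le_geometric (k : ℕ) {p : ℝ} (hp : 0 < p) (n : ℕ) :
    binomTerm (k + 1) p n ≤ 2 * (4 * p)⁻¹ ^ (n + 1) := by
  have hchoose : (4 : ℝ) ^ (n + 1) ≤ 2 * (n + 1) * Nat.choose (3 * (n + 1)) (n + 1) := by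
    exact_mod_cast four_pow_le_two_mul_mul_choose_three_mul n.succ_pos
  have hC : (0 : ℝ) < Nat.choose (3 * (n + 1)) (n + 1) := by
    exact_mod_cast Nat.choose_pos (by omega)
  have hpow : ((n : ℝ) + 1) ≤ (n + 1) ^ (k + 1) :=
    le_self_pow₀ (by linarith [n.cast_nonneg (α := ℝ)]) k.succ_ne_zero
  unfold binomTerm
  rw [inv_pow, mul_pow, div_le_iff₀ (by positivity)]
  calc (1 : ℝ) ≤ 2 * (n + 1) * Nat.choose (3 * (n + 1)) (n + 1) / 4 ^ (n + 1) := by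
        rw [le_div_iff₀ (by positivity)]; simpa using hchoose
    _ ≤ 2 * (n + 1) ^ (k + 1) * Nat.choose (3 * (n + 1)) (n + 1) / 4 ^ (n + 1) := by gcongr
    _ = _ := by field_simp

lemma summable_binomTerm (k : ℕ) {p : ℝ} (hp : 1 / 4 < p) : Summable (binomTerm (k + 1) p) := by
  have hr : (4 * p)⁻¹ < 1 := inv_lt_one_of_one_lt₀ (by linarith)
  refine Summable.of_nonneg_of_le (binomTerm_nonneg _ (by linarith))
    (binomTerm_le_geometric k (by linarith)) ?_
  simp_rw [pow_succ]
  exact ((summable_geometric_of_lt_one (by positivity) hr).mul_right _).mul_left 2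

lemma hasDerivAt_binomTerm (k : ℕ) {p : ℝ} (hp : p ≠ 0) (n : ℕ) :
    HasDerivAt (fun q => binomTerm (k + 1) q n) (-binomTerm k p n / p) p := by
  have hC : (Nat.choose (3 * (n + 1)) (n + 1) : ℝ) ≠ 0 := by
    exact_mod_cast (Nat.choose_pos (by omega)).ne'
  have h := (((hasDerivAt_pow (n + 1) p).const_mul (((n : ℝ) + 1) ^ (k + 1))).mul_const
    (Nat.choose (3 * (n + 1)) (n + 1) : ℝ)).inv (by positivity)
  simp only [binomTerm, one_div]
  refine h.congr_deriv ?_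
  simp only [Nat.add_sub_cancel]
  field_simp
  push_cast
  ring

lemma hasDerivAt_binomSeries (k : ℕ) {p : ℝ} (hp : 1 / 4 < p) :
    HasDerivAt (binomSeries (k + 2)) (-binomSeries (k + 1) p / p) p := by
  obtain ⟨a, ha, hap⟩ := exists_between hp
  have ha0 : 0 < a := by linarith
  have hbound : ∀ n, ∀ y ∈ Ioi a,
      ‖-binomTerm (k + 1) y n / y‖ ≤ binomTerm (k + 1) a n / a := by
    intro n y hy
    have hay : a ≤ y := le_of_lt hy
    rw [norm_div, norm_neg, Real.norm_of_nonneg (binomTerm_nonneg _ (by linarith) n),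
      Real.norm_of_nonneg (by linarith)]
    gcongr
    · exact binomTerm_nonneg _ ha0.le n
    · exact binomTerm_anti _ ha0 hay n
  have h := hasDerivAt_tsum_of_isPreconnected ((summable_binomTerm k ha).div_const a) isOpen_Ioi
    isPreconnected_Ioi (fun n y hy => hasDerivAt_binomTerm (k + 1) (ne_of_gt (ha0.trans hy)) n)
    hbound hap (summable_binomTerm (k + 1) (by linarith)) hap
  rwa [tsum_div_const, tsum_neg] at h

lemma tendsto_binomSeries_atTop (k : ℕ) : Tendsto (binomSeries (k + 1)) atTop (𝓝 0) := by
  have hlim : ∀ n, Tendsto (fun p => binomTerm (k + 1) p n) atTop (𝓝 0) := by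
    intro n
    simp only [binomTerm, one_div]
    refine tendsto_inv_atTop_zero.comp ?_
    refine Tendsto.atTop_mul_const (by exact_mod_cast Nat.choose_pos (by omega)) ?_
    exact (tendsto_pow_atTop n.succ_ne_zero).const_mul_atTop (by positivity)
  have hbound : ∀ᶠ p in atTop, ∀ n,
      ‖binomTerm (k + 1) p n‖ ≤ binomTerm (k + 1) 1 n := by
    filter_upwards [eventually_ge_atTop 1] with p hp n
    rw [Real.norm_of_nonneg (binomTerm_nonneg _ (by linarith) n)]
    exact binomTerm_anti _ one_pos hp n
  have h := tendsto_tsum_of_dominated_convergence (summable_binomTerm k (by norm_num)) hlim hbound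
  rwa [tsum_zero] at h

lemma mul_one_sub_sq_le {t : ℝ} (ht : t ≤ 1) : t * (1 - t) ^ 2 ≤ 4 / 27 := by
  nlinarith [sq_nonneg (3 * t - 1), sq_nonneg (1 - t)]

lemma hasSum_pow_mul_one_sub_pow_div {p t : ℝ} (hp : 4 / 27 < p) (ht : t ∈ Icc (0 : ℝ) 1) :
    HasSum (fun n : ℕ => t ^ n * (1 - t) ^ (2 * n + 2) / p ^ (n + 1))
      ((1 - t) ^ 2 / (p - t * (1 - t) ^ 2)) := by
  have hcubic := mul_one_sub_sq_le ht.2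
  have hr : t * (1 - t) ^ 2 / p < 1 := by rw [div_lt_one (by linarith)]; linarith
  have h := (hasSum_geometric_of_lt_one (by have := ht.1; positivity) hr).mul_left
    ((1 - t) ^ 2 / p)
  have hlimit : (1 - t) ^ 2 / p * (1 - t * (1 - t) ^ 2 / p)⁻¹ =
      (1 - t) ^ 2 / (p - t * (1 - t) ^ 2) := by
    field_simp
  rw [← hlimit]
  refine h.congr_fun fun n => ?_
  rw [pow_succ', pow_add, pow_mul, div_pow, mul_pow]
  field_simp
  ring

lemma continuousOn_one_sub_sq_div {p : ℝ} (hp : 4 / 27 < p) :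
    ContinuousOn (fun t : ℝ => (1 - t) ^ 2 / (p - t * (1 - t) ^ 2)) (uIcc 0 1) := by
  refine ContinuousOn.div (by fun_prop) (by fun_prop) fun t ht => ?_
  rw [uIcc_of_le zero_le_one] at ht
  linarith [mul_one_sub_sq_le ht.2]

lemma hasSum_binomTerm_one {p : ℝ} (hp : 4 / 27 < p) :
    HasSum (binomTerm 1 p) (∫ t in (0 : ℝ)..1, (1 - t) ^ 2 / (p - t * (1 - t) ^ 2)) := by
  have hterm : ∀ n, binomTerm 1 p n =
      ∫ t in (0 : ℝ)..1, t ^ n * (1 - t) ^ (2 * n + 2) / p ^ (n + 1) := by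
    intro n
    rw [intervalIntegral.integral_div, integral_pow_mul_one_sub_pow_two_mul_add_two, binomTerm,
      div_div, pow_one]
    ring_nf
  have hsum : ∀ t ∈ uIcc (0 : ℝ) 1,
      HasSum (fun n : ℕ => t ^ n * (1 - t) ^ (2 * n + 2) / p ^ (n + 1))
      ((1 - t) ^ 2 / (p - t * (1 - t) ^ 2)) := fun t ht =>
    hasSum_pow_mul_one_sub_pow_div hp (by rwa [uIcc_of_le zero_le_one] at ht)
  simp_rw [funext hterm]
  -- the nonnegative terms serve as their own dominating functions
  refine intervalIntegral.hasSum_integral_of_dominated_convergence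
    (fun n t => t ^ n * (1 - t) ^ (2 * n + 2) / p ^ (n + 1))
    (fun n => (Continuous.aestronglyMeasurable (by fun_prop))) (fun n => ?_)
    (.of_forall fun t ht => (hsum t (uIoc_subset_uIcc ht)).summable)
    (((continuousOn_one_sub_sq_div hp).congr fun t ht => (hsum t ht).tsum_eq).intervalIntegrable)
    (.of_forall fun t ht => hsum t (uIoc_subset_uIcc ht))
  refine .of_forall fun t ht => le_of_eq (Real.norm_of_nonneg ?_)
  rw [uIoc_of_le zero_le_one] at ht
  have : 0 ≤ 1 - t := by linarith [ht.2]
  have := ht.1.le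
  positivity

lemma arctan_sub_arctan {x y : ℝ} (h : -1 < x * y) :
    arctan x - arctan y = arctan ((x - y) / (1 + x * y)) := by
  rw [sub_eq_add_neg, ← arctan_neg, arctan_add (by linarith)]
  congr 1
  ring

lemma sqrt_div_mul_sq_eq {m : ℝ} (hm : 1 / 2 < m) :
    √((3 * m - 1) / ((m + 1) * (2 * m - 1) ^ 2)) =
      √((m + 1) * (3 * m - 1)) / ((m + 1) * (2 * m - 1)) := by
  have h : 0 < (m + 1) * (2 * m - 1) := by nlinarith
  rw [← Real.sqrt_sq h.le, ← Real.sqrt_div' _ (sq_nonneg _)]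
  congr 1
  field_simp

lemma arctan_sqrt_div_mul_sq_eq {m s : ℝ} (hm : 1 / 2 < m) (hs : 0 < s)
    (hs2 : s ^ 2 = (m + 1) * (3 * m - 1)) :
    arctan √((3 * m - 1) / ((m + 1) * (2 * m - 1) ^ 2)) =
      arctan ((m + 1) / s) - arctan ((m - 1) / s) := by
  have hs' : s = √((m + 1) * (3 * m - 1)) := by rw [← hs2, Real.sqrt_sq hs.le]
  rw [arctan_sub_arctan, sqrt_div_mul_sq_eq hm, ← hs']
  · have h2m : 2 * m - 1 ≠ 0 := by linarith
    have hm1 : m + 1 ≠ 0 := by linarith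
    have hs0 : s ≠ 0 := hs.ne'
    have hden : 1 + (m + 1) / s * ((m - 1) / s) ≠ 0 := by
      rw [show 1 + (m + 1) / s * ((m - 1) / s) = (m + 1) * (4 * m - 2) / s ^ 2 by
        field_simp; linear_combination hs2]
      have : 0 < 4 * m - 2 := by linarith
      positivity
    congr 1
    rw [eq_div_iff hden]
    field_simp
    rw [div_eq_iff (by linarith)]
    linear_combination hs2
  · rw [div_mul_div_comm, lt_div_iff₀ (by positivity)]
    nlinarith

lemma hasDerivAt_antideriv_one_sub_sq_div {m s t : ℝ} (hm : 0 < m) (hs : 0 < s)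
    (hs2 : s ^ 2 = (m + 1) * (3 * m - 1)) (ht : t < 1 + m) :
    HasDerivAt (fun t => (2 * (m + 1) / s * arctan ((2 * t + m - 1) / s) - m * log (1 + m - t)
        - (m + 1) * log (t ^ 2 + (m - 1) * t + m ^ 2)) / (3 * m + 2))
      ((1 - t) ^ 2 / (m ^ 2 + m ^ 3 - t * (1 - t) ^ 2)) t := by
  -- the denominator factors as `(1 + m - t) * q t`, and `4 * q t = (2 * t + m - 1) ^ 2 + s ^ 2`
  have hq : 0 < t ^ 2 + (m - 1) * t + m ^ 2 := by nlinarith [sq_nonneg (2 * t + m - 1)]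
  have hl : 0 < 1 + m - t := by linarith
  have hC := ((((hasDerivAt_id t).const_mul 2).add_const m).sub_const 1 |>.div_const s).arctan
  have hA := ((hasDerivAt_id t).const_sub (1 + m)).log hl.ne'
  have hB := (((hasDerivAt_pow 2 t).fun_add ((hasDerivAt_id t).const_mul (m - 1))).add_const
    (m ^ 2)).log hq.ne'
  refine (((hC.const_mul (2 * (m + 1) / s)).sub (hA.const_mul m)).sub
    (hB.const_mul (m + 1))).div_const (3 * m + 2) |>.congr_deriv ?_
  rw [show m ^ 2 + m ^ 3 - t * (1 - t) ^ 2 = (1 + m - t) * (t ^ 2 + (m - 1) * t + m ^ 2) by ring]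
  simp only [id, Nat.cast_ofNat, Nat.add_one_sub_one, pow_one]
  -- as an atom, `q` is known to `field_simp` to be nonzero through `hq`
  generalize hQ : t ^ 2 + (m - 1) * t + m ^ 2 = q at hq ⊢
  field_simp
  rw [hs2, ← hQ]
  ring

lemma integral_one_sub_sq_div_eq {m : ℝ} (hm : 1 / 2 < m) :
    ∫ t in (0 : ℝ)..1, (1 - t) ^ 2 / (m ^ 2 + m ^ 3 - t * (1 - t) ^ 2) =
      (2 * (m + 1) / √((m + 1) * (3 * m - 1)) *
        arctan √((3 * m - 1) / ((m + 1) * (2 * m - 1) ^ 2)) - log (1 + 1 / m)) / (3 * m + 2) := by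
  have hm0 : 0 < m := by linarith
  have hs2 : √((m + 1) * (3 * m - 1)) ^ 2 = (m + 1) * (3 * m - 1) := Real.sq_sqrt (by nlinarith)
  have hs : 0 < √((m + 1) * (3 * m - 1)) := Real.sqrt_pos.mpr (by nlinarith)
  rw [integral_eq_sub_of_hasDerivAt (fun t ht => hasDerivAt_antideriv_one_sub_sq_div hm0 hs hs2 ?_)
    ((continuousOn_one_sub_sq_div (by nlinarith)).intervalIntegrable),
    arctan_sqrt_div_mul_sq_eq hm hs hs2]
  · rw [show (1 : ℝ) + 1 / m = (m + 1) / m by field_simp, Real.log_div (by positivity) hm0.ne',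
      show (1 : ℝ) ^ 2 + (m - 1) * 1 + m ^ 2 = m * (m + 1) by ring,
      Real.log_mul hm0.ne' (by positivity),
      show (0 : ℝ) ^ 2 + (m - 1) * 0 + m ^ 2 = m ^ 2 by ring, Real.log_pow]
    ring_nf
  · rw [uIcc_of_le zero_le_one] at ht
    linarith [ht.2]

lemma hasDerivAt_arctan_sqrt_div_mul_sq {m : ℝ} (hm : 1 / 2 < m) :
    HasDerivAt (fun y => arctan √((3 * y - 1) / ((y + 1) * (2 * y - 1) ^ 2)))
      (-3 / (2 * m * √((m + 1) * (3 * m - 1)))) m := by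
  have h2m : 0 < 2 * m - 1 := by linarith
  have hden : 0 < (m + 1) * (2 * m - 1) ^ 2 := by positivity
  have hv0 : 0 < (3 * m - 1) / ((m + 1) * (2 * m - 1) ^ 2) := by
    have : 0 < 3 * m - 1 := by linarith
    positivity
  have hv := ((((hasDerivAt_id m).const_mul 3).sub_const 1).fun_div
    (((hasDerivAt_id m).add_const 1).fun_mul
      ((((hasDerivAt_id m).const_mul 2).sub_const 1).fun_pow 2))
    hden.ne')
  have h := (hv.sqrt (by simpa only [id] using hv0.ne')).arctan
  refine h.congr_deriv ?_
  simp only [id, Nat.cast_ofNat, Nat.add_one_sub_one, pow_one]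
  have hv1 : 1 + (3 * m - 1) / ((m + 1) * (2 * m - 1) ^ 2) =
      4 * m ^ 3 / ((m + 1) * (2 * m - 1) ^ 2) := by
    rw [eq_div_iff hden.ne', add_mul, div_mul_cancel₀ _ hden.ne']
    ring
  rw [Real.sq_sqrt hv0.le, hv1, sqrt_div_mul_sq_eq hm]
  -- as an atom, `c` is known to `field_simp` to be nonzero through `h2m`
  set c := 2 * m - 1 with hc
  field_simp
  rw [hc]
  ring

lemma hasDerivAt_log_one_add_one_div {m : ℝ} (hm : 0 < m) :
    HasDerivAt (fun y => log (1 + 1 / y)) (-1 / (m * (m + 1))) m := by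
  have h := ((hasDerivAt_inv hm.ne').const_add 1).log (by positivity)
  simp only [one_div]
  refine h.congr_deriv ?_
  field_simp

lemma tendsto_arctan_sqrt_sub_log_atTop :
    Tendsto (fun y : ℝ => 2 / 3 * arctan √((3 * y - 1) / ((y + 1) * (2 * y - 1) ^ 2)) ^ 2
      - 1 / 2 * log (1 + 1 / y) ^ 2) atTop (𝓝 0) := by
  -- in the variable `x = 1 / y` the function is continuous at `x = 0`, where it vanishes
  set G : ℝ → ℝ := fun x => 2 / 3 * arctan √(x ^ 2 * (3 - x) / ((1 + x) * (2 - x) ^ 2)) ^ 2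
    - 1 / 2 * log (1 + x) ^ 2
  have hG : ContinuousAt G 0 := by fun_prop (disch := norm_num)
  have h := hG.tendsto.comp tendsto_inv_atTop_zero
  simp only [G, Function.comp_def] at h
  norm_num at h
  refine h.congr' ?_
  filter_upwards [eventually_gt_atTop 1] with y hy
  congr 4
  field_simp
  ring

lemma eqOn_Ioi_of_hasDerivAt_of_tendsto_atTop {f g f' : ℝ → ℝ} {a l : ℝ}
    (hf : ∀ x ∈ Ioi a, HasDerivAt f (f' x) x) (hg : ∀ x ∈ Ioi a, HasDerivAt g (f' x) x)
    (hfl : Tendsto f atTop (𝓝 l)) (hgl : Tendsto g atTop (𝓝 l)) : EqOn f g (Ioi a) := by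
  obtain ⟨c, hc⟩ := isOpen_Ioi.exists_eq_add_of_deriv_eq isPreconnected_Ioi
    (fun x hx => (hf x hx).differentiableAt.differentiableWithinAt)
    (fun x hx => (hg x hx).differentiableAt.differentiableWithinAt)
    (fun x hx => by rw [(hf x hx).deriv, (hg x hx).deriv])
  have hfl' : Tendsto f atTop (𝓝 (l + c)) :=
    (hgl.add_const c).congr' (eventually_of_mem (Ioi_mem_atTop a) fun x hx => (hc hx).symm)
  have hc0 : c = 0 := by linarith [tendsto_nhds_unique hfl hfl']
  intro x hx
  simpa [hc0] using hc hx

lemma hasDerivAt_binomSeries_two_comp {m : ℝ} (hm : 1 / 2 < m) :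
    HasDerivAt (fun y => binomSeries 2 (y ^ 2 + y ^ 3))
      (log (1 + 1 / m) / (m * (m + 1)) - 2 * arctan √((3 * m - 1) / ((m + 1) * (2 * m - 1) ^ 2))
        / (m * √((m + 1) * (3 * m - 1)))) m := by
  have hp : 1 / 4 < m ^ 2 + m ^ 3 := by nlinarith
  have h := (hasDerivAt_binomSeries 0 hp).comp m ((hasDerivAt_pow 2 m).fun_add (hasDerivAt_pow 3 m))
  refine h.congr_deriv ?_
  rw [binomSeries, (hasSum_binomTerm_one (by linarith)).tsum_eq, integral_one_sub_sq_div_eq hm]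
  field_simp
  ring

lemma hasDerivAt_arctan_sqrt_sub_log {m : ℝ} (hm : 1 / 2 < m) :
    HasDerivAt (fun y => 2 / 3 * arctan √((3 * y - 1) / ((y + 1) * (2 * y - 1) ^ 2)) ^ 2
      - 1 / 2 * log (1 + 1 / y) ^ 2)
      (log (1 + 1 / m) / (m * (m + 1)) - 2 * arctan √((3 * m - 1) / ((m + 1) * (2 * m - 1) ^ 2))
        / (m * √((m + 1) * (3 * m - 1)))) m := by
  have hm0 : 0 < m := by linarith
  have h := (((hasDerivAt_arctan_sqrt_div_mul_sq hm).pow 2).const_mul (2 / 3)).sub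
    (((hasDerivAt_log_one_add_one_div hm0).pow 2).const_mul (1 / 2))
  refine h.congr_deriv ?_
  field_simp
  ring

theorem stmt_11 (m : ℝ) (hm : 1 / 2 < m) :
    ∑' n : ℕ,
        (1 : ℝ) /
          ((n + 1) ^ 2 * (m ^ 2 + m ^ 3) ^ (n + 1) *
            (Nat.choose (3 * (n + 1)) (n + 1))) =
      (2 / 3) *
          Real.arctan (Real.sqrt ((3 * m - 1) / ((m + 1) * (2 * m - 1) ^ 2))) ^ 2 -
        (1 / 2) * Real.log (1 + 1 / m) ^ 2 := by
  have hcubic : Tendsto (fun y : ℝ => y ^ 2 + y ^ 3) atTop atTop :=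
    (tendsto_pow_atTop two_ne_zero).atTop_add_atTop (tendsto_pow_atTop three_ne_zero)
  exact eqOn_Ioi_of_hasDerivAt_of_tendsto_atTop (fun y hy => hasDerivAt_binomSeries_two_comp hy)
    (fun y hy => hasDerivAt_arctan_sqrt_sub_log hy) ((tendsto_binomSeries_atTop 1).comp hcubic)
    tendsto_arctan_sqrt_sub_log_atTop hm
end
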